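/- arXiv:2010.12890 — 6 statements merged into one kernel-verified Lean document; each statement's English description precedes it below -/
import Mathlib

section
/- Let E = (1/n)(E + 𝒟) be a d-dimensional fractal cube with IFS {φ_j(z) = (z + d_j)/n}. Let z₀ ∈ E, let F be the containing face of z₀ in [0,1]^d, and let σ be a finite word over the alphabet {1,…,N}. If F' is the containing face of φ_σ(z₀), then either φ_σ(z₀) ∈ F or dim F' ≥ dim F + 1. -/
open Set

/-- The unit cube `[0,1]^d`. -/
def unitCube (d : ℕ) : Set (Fin d → ℝ) := {x | ∀ j, x j ∈ Icc (0:ℝ) 1}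

/-- `F` is a face of the convex set `C`. -/
def IsFaceOf {d : ℕ} (C F : Set (Fin d → ℝ)) : Prop :=
  Convex ℝ F ∧ F ⊆ C ∧
    ∀ x ∈ C, ∀ y ∈ C, ∀ t : ℝ, t ∈ Ioo (0:ℝ) 1 →
      t • x + (1 - t) • y ∈ F → x ∈ F ∧ y ∈ F

/-- The dimension of a face, i.e. the dimension of its affine hull. -/
noncomputable def faceDim {d : ℕ} (F : Set (Fin d → ℝ)) : ℕ :=
  Module.finrank ℝ (affineSpan ℝ F).direction

/-- `F` is the containing face of `z` in `C`: `z` is a relative interior point of `F`. -/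
def IsContainingFace {d : ℕ} (C F : Set (Fin d → ℝ)) (z : Fin d → ℝ) : Prop :=
  IsFaceOf C F ∧ z ∈ intrinsicInterior ℝ F

section aux

lemma mem_face_of_agree {d : ℕ} {F : Set (Fin d → ℝ)} {z x : Fin d → ℝ}
    (hFace : IsFaceOf (unitCube d) F) (hzF : z ∈ F)
    (hx : x ∈ unitCube d)
    (hagree : ∀ i, (z i = 0 ∨ z i = 1) → x i = z i) : x ∈ F := by
  classical
  obtain ⟨-, hsub, hax⟩ := hFace
  have hzC : z ∈ unitCube d := hsub hzF
  rcases isEmpty_or_nonempty (Fin d) with he | hne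
  · have : x = z := funext fun i => (he.false i).elim
    rwa [this]
  set g : Fin d → ℝ := fun i => if z i = 0 ∨ z i = 1 then 1 else min (z i) (1 - z i) with hg
  set t : ℝ := Finset.univ.inf' Finset.univ_nonempty g with ht
  have hgpos : ∀ i, 0 < g i := by
    intro i
    by_cases h : z i = 0 ∨ z i = 1
    · simp [hg, h]
    · push_neg at h
      have h1 : 0 < z i := lt_of_le_of_ne (hzC i).1 (Ne.symm h.1)
      have h2 : z i < 1 := lt_of_le_of_ne (hzC i).2 h.2
      simp only [hg, if_neg (not_or.2 h), lt_min_iff]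
      constructor <;> linarith
  have ht0 : 0 < t := (Finset.lt_inf'_iff _).2 fun i _ => hgpos i
  set y : Fin d → ℝ := z + t • (z - x) with hy
  have hyC : y ∈ unitCube d := by
    intro i
    have hyi : y i = z i + t * (z i - x i) := by simp [hy]
    by_cases h : z i = 0 ∨ z i = 1
    · have hxz : x i = z i := hagree i h
      rw [hyi, hxz]
      simpa using hzC i
    · have htle : t ≤ min (z i) (1 - z i) := by
        have h2 := Finset.inf'_le g (Finset.mem_univ i)
        rw [← ht] at h2
        simpa [hg, h] using h2
      have hz1 : t ≤ z i := le_trans htle (min_le_left _ _)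
      have hz2 : t ≤ 1 - z i := le_trans htle (min_le_right _ _)
      have hx1 := (hx i).1
      have hx2 := (hx i).2
      have hzc1 := (hzC i).1
      have hzc2 := (hzC i).2
      exact ⟨by rw [hyi]; nlinarith, by rw [hyi]; nlinarith⟩
  set c : ℝ := t / (1 + t) with hc
  have hc1 : c ∈ Ioo (0:ℝ) 1 := by
    constructor
    · positivity
    · rw [hc, div_lt_one (by linarith)]; linarith
  have hcomb : c • x + (1 - c) • y = z := by
    funext i
    have hyi : y i = z i + t * (z i - x i) := by simp [hy]
    simp only [Pi.add_apply, Pi.smul_apply, smul_eq_mul, hyi, hc]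
    have : (1:ℝ) + t ≠ 0 := by linarith
    field_simp
    ring
  exact (hax x hx y hyC c hc1 (by rw [hcomb]; exact hzF)).1

lemma face_coord_eq {d : ℕ} {F : Set (Fin d → ℝ)} {z : Fin d → ℝ}
    (hsub : F ⊆ unitCube d) (hz : z ∈ intrinsicInterior ℝ F)
    {x : Fin d → ℝ} (hx : x ∈ F) {i : Fin d} (hzi : z i = 0 ∨ z i = 1) : x i = z i := by
  obtain ⟨p, hp, hpz⟩ := hz
  have hzF : z ∈ F := by
    have := interior_subset hp
    rwa [Set.mem_preimage, hpz] at this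
  obtain ⟨ε, hε, hball⟩ := Metric.mem_nhds_iff.1 (mem_interior_iff_mem_nhds.1 hp)
  set t : ℝ := ε / (2 * (dist z x + 1)) with ht
  have hd0 : (0:ℝ) ≤ dist z x := dist_nonneg
  have ht0 : 0 < t := by positivity
  set y : Fin d → ℝ := t • (z - x) + z with hy
  have hyspan : y ∈ affineSpan ℝ F := by
    have hzs : z ∈ affineSpan ℝ F := subset_affineSpan ℝ F hzF
    have hxs : x ∈ affineSpan ℝ F := subset_affineSpan ℝ F hx
    have h2 := AffineSubspace.smul_vsub_vadd_mem (affineSpan ℝ F) t hzs hxs hzs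
    simpa [vsub_eq_sub, vadd_eq_add] using h2
  have hdist : dist y z < ε := by
    have h1 : dist y z = t * dist z x := by
      rw [dist_eq_norm, hy]
      have : t • (z - x) + z - z = t • (z - x) := by abel
      rw [this, norm_smul, Real.norm_eq_abs, abs_of_pos ht0, dist_eq_norm]
    rw [h1, ht]
    rw [div_mul_eq_mul_div, div_lt_iff₀ (by positivity)]
    nlinarith
  have hyF : y ∈ F := by
    have hmem : (⟨y, hyspan⟩ : affineSpan ℝ F) ∈ Metric.ball p ε := by
      rw [Metric.mem_ball, Subtype.dist_eq, hpz]
      exact hdist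
    exact hball hmem
  have hyC := hsub hyF i
  have hyi : y i = z i + t * (z i - x i) := by simp [hy]; ring
  have hx1 := (hsub hx i).1
  have hx2 := (hsub hx i).2
  rcases hzi with h | h
  · rw [h] at hyi ⊢
    nlinarith [hyC.1]
  · rw [h] at hyi ⊢
    nlinarith [hyC.2]

lemma li_single {d : ℕ} (s : Finset (Fin d)) :
    LinearIndependent ℝ (fun i : s => (Pi.single (i : Fin d) 1 : Fin d → ℝ)) := by
  have h := (Pi.basisFun ℝ (Fin d)).linearIndependent
  have h2 := h.comp (Subtype.val : s → Fin d) Subtype.val_injective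
  have h3 : (fun i : s => (Pi.single (i : Fin d) 1 : Fin d → ℝ))
      = (⇑(Pi.basisFun ℝ (Fin d)) ∘ Subtype.val) := by
    funext i; simp [Function.comp]
  rw [h3]; exact h2

lemma finrank_span_single {d : ℕ} (s : Finset (Fin d)) :
    Module.finrank ℝ (Submodule.span ℝ
      (Set.range fun i : s => (Pi.single (i : Fin d) 1 : Fin d → ℝ))) = s.card := by
  rw [finrank_span_eq_card (li_single s), Fintype.card_coe]

lemma foldr_coord {d n N : ℕ} (hn : 2 ≤ n) (D : Fin N → Fin d → ℝ)
    (hD : ∀ j i, ∃ m : ℕ, m < n ∧ D j i = (m : ℝ))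
    (φ : Fin N → (Fin d → ℝ) → (Fin d → ℝ))
    (hφ : ∀ j x, φ j x = (n : ℝ)⁻¹ • (x + D j))
    (z : Fin d → ℝ) (σ : List (Fin N)) (i : Fin d) :
    ∃ a : ℕ, a + 1 ≤ n ^ σ.length ∧
      (σ.foldr (fun j f => φ j ∘ f) id z) i = (z i + a) / (n : ℝ) ^ σ.length := by
  induction σ with
  | nil => exact ⟨0, by simp, by simp⟩
  | cons j σ ih =>
    obtain ⟨a, ha, hw⟩ := ih
    obtain ⟨m, hm, hDm⟩ := hD j i
    refine ⟨a + m * n ^ σ.length, ?_, ?_⟩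
    · have h1 : m ≤ n - 1 := by omega
      calc a + m * n ^ σ.length + 1 = (a + 1) + m * n ^ σ.length := by ring
        _ ≤ n ^ σ.length + (n - 1) * n ^ σ.length := by
            exact Nat.add_le_add ha (Nat.mul_le_mul_right _ h1)
        _ = (1 + (n - 1)) * n ^ σ.length := by ring
        _ = n ^ (j :: σ : List (Fin N)).length := by
            have h3 : 1 + (n - 1) = n := by omega
            rw [h3, List.length_cons, pow_succ, Nat.mul_comm]
    · have hfold : (List.foldr (fun j f => φ j ∘ f) id (j :: σ) z) i
          = (n:ℝ)⁻¹ * ((List.foldr (fun j f => φ j ∘ f) id σ z) i + D j i) := by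
        simp [List.foldr_cons, hφ]
      rw [hfold, hw, hDm]
      have hnR : (n : ℝ) ≠ 0 := by
        have : (0:ℕ) < n := by omega
        exact_mod_cast this.ne'
      have hnk : ((n : ℝ)) ^ σ.length ≠ 0 := pow_ne_zero _ hnR
      rw [List.length_cons]
      push_cast
      field_simp
      ring

end aux

theorem containing_face_dim_increase
    (d n N : ℕ) (hn : 2 ≤ n)
    (D : Fin N → (Fin d → ℝ))
    (hD : ∀ j i, ∃ m : ℕ, m < n ∧ D j i = (m : ℝ))
    (φ : Fin N → (Fin d → ℝ) → (Fin d → ℝ))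
    (hφ : ∀ j x, φ j x = (n : ℝ)⁻¹ • (x + D j))
    (E : Set (Fin d → ℝ)) (hEne : E.Nonempty) (hEc : IsCompact E)
    (hE : E = ⋃ j, φ j '' E)
    (z₀ : Fin d → ℝ) (hz₀ : z₀ ∈ E)
    (σ : List (Fin N))
    (F F' : Set (Fin d → ℝ))
    (hF : IsContainingFace (unitCube d) F z₀)
    (hF' : IsContainingFace (unitCube d) F' (σ.foldr (fun j f => φ j ∘ f) id z₀)) :
    σ.foldr (fun j f => φ j ∘ f) id z₀ ∈ F ∨ faceDim F + 1 ≤ faceDim F' := by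
  classical
  set w := σ.foldr (fun j f => φ j ∘ f) id z₀ with hwdef
  have hzF : z₀ ∈ F := intrinsicInterior_subset hF.2
  have hwF' : w ∈ F' := intrinsicInterior_subset hF'.2
  have hFsub : F ⊆ unitCube d := hF.1.2.1
  have hF'sub : F' ⊆ unitCube d := hF'.1.2.1
  have hzC : z₀ ∈ unitCube d := hFsub hzF
  have hwC : w ∈ unitCube d := hF'sub hwF'
  set k := σ.length with hk
  have key : ∀ i, ∃ a : ℕ, a + 1 ≤ n ^ k ∧ w i = (z₀ i + a) / (n:ℝ) ^ k :=
    fun i => foldr_coord hn D hD φ hφ z₀ σ i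
  have hn0 : (0:ℝ) < (n:ℝ) := by exact_mod_cast (by omega : 0 < n)
  have hnk : (0:ℝ) < (n:ℝ) ^ k := pow_pos hn0 k
  have f1 : ∀ i, z₀ i ∈ Ioo (0:ℝ) 1 → w i ∈ Ioo (0:ℝ) 1 := by
    intro i hi
    obtain ⟨a, ha, hwi⟩ := key i
    have haR : (a:ℝ) + 1 ≤ (n:ℝ) ^ k := by exact_mod_cast ha
    have ha0 : (0:ℝ) ≤ (a:ℝ) := Nat.cast_nonneg a
    constructor
    · rw [hwi]
      apply div_pos _ hnk
      linarith [hi.1]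
    · rw [hwi, div_lt_one hnk]
      linarith [hi.2]
  have f2 : ∀ i, w i = 0 → z₀ i = 0 := by
    intro i h
    obtain ⟨a, ha, hwi⟩ := key i
    rw [h] at hwi
    have h0 : z₀ i + a = 0 := by
      have := hwi.symm
      rwa [div_eq_zero_iff, or_iff_left hnk.ne'] at this
    have ha0 : (0:ℝ) ≤ (a:ℝ) := Nat.cast_nonneg a
    have := (hzC i).1
    linarith
  have f3 : ∀ i, w i = 1 → z₀ i = 1 := by
    intro i h
    obtain ⟨a, ha, hwi⟩ := key i
    rw [h] at hwi
    have h0 : z₀ i + a = (n:ℝ) ^ k := by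
      field_simp at hwi
      linarith [hwi]
    have haR : (a:ℝ) + 1 ≤ (n:ℝ) ^ k := by exact_mod_cast ha
    have := (hzC i).2
    linarith
  by_cases hP : ∀ i, (z₀ i = 0 ∨ z₀ i = 1) → w i = z₀ i
  · left
    exact mem_face_of_agree hF.1 hzF hwC hP
  · right
    push_neg at hP
    obtain ⟨i₀, hi₀fix, hi₀ne⟩ := hP
    set freeZ : Finset (Fin d) := Finset.univ.filter (fun i => z₀ i ∈ Ioo (0:ℝ) 1) with hfz
    set freeW : Finset (Fin d) := Finset.univ.filter (fun i => w i ∈ Ioo (0:ℝ) 1) with hfw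
    have hZW : freeZ ⊆ freeW := by
      intro i hi
      rw [hfz, Finset.mem_filter] at hi
      rw [hfw, Finset.mem_filter]
      exact ⟨Finset.mem_univ i, f1 i hi.2⟩
    have hi₀W : i₀ ∈ freeW := by
      rw [hfw, Finset.mem_filter]
      refine ⟨Finset.mem_univ i₀, ?_⟩
      have h1 := (hwC i₀).1
      have h2 := (hwC i₀).2
      constructor
      · rcases lt_or_eq_of_le h1 with h | h
        · exact h
        · exfalso
          have := f2 i₀ h.symm
          rcases hi₀fix with hz | hz
          · exact hi₀ne (by rw [← h, hz])
          · rw [this] at hz; norm_num at hz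
      · rcases lt_or_eq_of_le h2 with h | h
        · exact h
        · exfalso
          have := f3 i₀ h
          rcases hi₀fix with hz | hz
          · rw [this] at hz; norm_num at hz
          · exact hi₀ne (by rw [h, hz])
    have hi₀Z : i₀ ∉ freeZ := by
      rw [hfz, Finset.mem_filter]
      rintro ⟨-, h1, h2⟩
      rcases hi₀fix with hz | hz
      · rw [hz] at h1; exact lt_irrefl _ h1
      · rw [hz] at h2; exact lt_irrefl _ h2
    have hcard : freeZ.card < freeW.card := by
      apply Finset.card_lt_card
      rw [Finset.ssubset_iff_of_subset hZW]
      exact ⟨i₀, hi₀W, hi₀Z⟩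
    have hfixZ : ∀ i, i ∉ freeZ → (z₀ i = 0 ∨ z₀ i = 1) := by
      intro i hi
      rw [hfz, Finset.mem_filter] at hi
      push_neg at hi
      have h2 := hi (Finset.mem_univ i)
      rw [Set.mem_Ioo] at h2
      push_neg at h2
      rcases lt_or_eq_of_le (hzC i).1 with h | h
      · right
        exact le_antisymm (hzC i).2 (h2 h)
      · left; exact h.symm
    have hupper : faceDim F ≤ freeZ.card := by
      have hle : vectorSpan ℝ F ≤ Submodule.span ℝ
          (Set.range fun i : freeZ => (Pi.single (i : Fin d) 1 : Fin d → ℝ)) := by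
        rw [vectorSpan]
        apply Submodule.span_le.2
        rintro v hv
        rw [Set.mem_vsub] at hv
        obtain ⟨x, hx, y, hy, rfl⟩ := hv
        have hxyz : ∀ i, i ∉ freeZ → x i - y i = 0 := by
          intro i hi
          have hfix := hfixZ i hi
          rw [face_coord_eq hFsub hF.2 hx hfix, face_coord_eq hFsub hF.2 hy hfix, sub_self]
        have hrepr : x -ᵥ y = ∑ i ∈ freeZ, (x i - y i) • (Pi.single (i : Fin d) (1:ℝ) : Fin d → ℝ) := by
          funext j
          rw [vsub_eq_sub]
          simp only [Finset.sum_apply, Pi.smul_apply, Pi.single_apply, smul_eq_mul,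
            mul_ite, mul_one, mul_zero, Pi.sub_apply]
          rw [Finset.sum_ite_eq freeZ j (fun i => x i - y i)]
          by_cases hj : j ∈ freeZ
          · simp [hj]
          · simp only [hj, if_false]
            exact hxyz j hj
        rw [hrepr]
        exact Submodule.sum_mem _ fun i hi =>
          Submodule.smul_mem _ _ (Submodule.subset_span ⟨⟨i, hi⟩, rfl⟩)
      calc faceDim F = Module.finrank ℝ (vectorSpan ℝ F) := by
              rw [faceDim, direction_affineSpan]
        _ ≤ Module.finrank ℝ (Submodule.span ℝ
              (Set.range fun i : freeZ => (Pi.single (i : Fin d) 1 : Fin d → ℝ))) :=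
              Submodule.finrank_mono hle
        _ = freeZ.card := finrank_span_single _
    have hlower : freeW.card ≤ faceDim F' := by
      have hle : Submodule.span ℝ
          (Set.range fun i : freeW => (Pi.single (i : Fin d) 1 : Fin d → ℝ)) ≤
          vectorSpan ℝ F' := by
        apply Submodule.span_le.2
        rintro v ⟨⟨i, hi⟩, rfl⟩
        have hwi : w i ∈ Ioo (0:ℝ) 1 := by
          rw [hfw, Finset.mem_filter] at hi
          exact hi.2
        have hne : ∀ jj, (w jj = 0 ∨ w jj = 1) → jj ≠ i := by
          rintro jj hjj rfl
          rcases hjj with h | h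
          · rw [h] at hwi; exact lt_irrefl _ hwi.1
          · rw [h] at hwi; exact lt_irrefl _ hwi.2
        have hx1C : Function.update w i 1 ∈ unitCube d := by
          intro jj
          by_cases h : jj = i
          · subst h; simp [Function.update_self]
          · rw [Function.update_of_ne h]; exact hwC jj
        have hx0C : Function.update w i 0 ∈ unitCube d := by
          intro jj
          by_cases h : jj = i
          · subst h; simp [Function.update_self]
          · rw [Function.update_of_ne h]; exact hwC jj
        have hx1F : Function.update w i 1 ∈ F' :=
          mem_face_of_agree hF'.1 hwF' hx1C fun jj hjj => by
            rw [Function.update_of_ne (hne jj hjj)]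
        have hx0F : Function.update w i 0 ∈ F' :=
          mem_face_of_agree hF'.1 hwF' hx0C fun jj hjj => by
            rw [Function.update_of_ne (hne jj hjj)]
        have hmem : Function.update w i 1 -ᵥ Function.update w i 0 ∈ vectorSpan ℝ F' :=
          vsub_mem_vectorSpan ℝ hx1F hx0F
        have heq : (Pi.single (i : Fin d) (1:ℝ) : Fin d → ℝ)
            = Function.update w i 1 -ᵥ Function.update w i 0 := by
          funext jj
          rw [vsub_eq_sub]
          by_cases h : jj = i
          · subst h; simp [Function.update_self, Pi.single_apply]
          · simp [Function.update_of_ne h, Pi.single_apply, h]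
        show (Pi.single (i : Fin d) (1:ℝ) : Fin d → ℝ) ∈ (vectorSpan ℝ F' : Set (Fin d → ℝ))
        rw [heq]
        exact hmem
      calc freeW.card = Module.finrank ℝ (Submodule.span ℝ
              (Set.range fun i : freeW => (Pi.single (i : Fin d) 1 : Fin d → ℝ))) :=
              (finrank_span_single _).symm
        _ ≤ Module.finrank ℝ (vectorSpan ℝ F') := Submodule.finrank_mono hle
        _ = faceDim F' := by rw [faceDim, direction_affineSpan]
    omega
end

section
/- Let E = E(n,𝒟) be a d-dimensional fractal cube and let E_k = ([0,1]^d + 𝒟_k)/n^k be its k-th approximation, where 𝒟_k = 𝒟 + n𝒟 + ⋯ + n^{k−1}𝒟. If for some k > 0 the set E_k has a connected component U with U ∩ ∂[0,1]^d = ∅ (a k-th island), then E has a trivial point. -/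
/-!
The island `U` lies in the open unit cube `Q°`, and since `E_k` is compact it is contained in a
set `V = O ∩ E_k` that is closed, with `O ⊆ Q°` open. Some level-`k` cell `f(Q)` of `E_k` lies
in `U`; the fixed point `x` of the contraction `f` belongs to `E`. Two grid cubes of the same
level overlap only along their boundaries, so a point of `E` in `fᵐ(O)` is `fᵐ(y)` with `y ∈ E`.
Hence `E ∩ fᵐ(V) = E ∩ fᵐ(O)` is clopen in `E`, so the component of `x` in `E` lies in `fᵐ(V)`,
whose diameter is at most `n^(-km)`.
-/

open Set

open Filter Topology

theorem nonpos_of_forall_le_inv_pow_mul {a r C : ℝ} (hr : 1 < r)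
    (h : ∀ m : ℕ, a ≤ (r ^ m)⁻¹ * C) : a ≤ 0 := by
  have hlim : Tendsto (fun m : ℕ => (r ^ m)⁻¹ * C) atTop (𝓝 0) := by
    simpa using (tendsto_inv_atTop_zero.comp (tendsto_pow_atTop_atTop_of_one_lt hr)).mul_const C
  exact ge_of_tendsto' hlim h

theorem ContractingWith.fixedPoint_mem {α : Type*} [MetricSpace α] [Nonempty α]
    [CompleteSpace α] {K : NNReal} {f : α → α} (hf : ContractingWith K f) {s : Set α}
    (hs : IsClosed s) (hsf : MapsTo f s s) {x : α} (hx : x ∈ s) : fixedPoint f hf ∈ s :=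
  hs.mem_of_tendsto (hf.tendsto_iterate_fixedPoint x)
    (Eventually.of_forall fun m => hsf.iterate m hx)

theorem exists_isClopen_subset_of_connectedComponent_subset {X : Type*} [TopologicalSpace X]
    [CompactSpace X] [T2Space X] {x : X} {O : Set X} (hO : IsOpen O)
    (h : connectedComponent x ⊆ O) : ∃ V, IsClopen V ∧ x ∈ V ∧ V ⊆ O := by
  rw [connectedComponent_eq_iInter_isClopen] at h
  obtain ⟨u, hu⟩ := hO.isClosed_compl.isCompact.elim_finite_subfamily_closed
    (fun s : {s : Set X // IsClopen s ∧ x ∈ s} => (s : Set X)) (fun s => s.2.1.isClosed)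
    (disjoint_iff_inter_eq_empty.1 (disjoint_compl_left.mono_right h))
  exact ⟨⋂ s ∈ u, (s : Set X), isClopen_biInter_finset fun s _ => s.2.1,
    mem_iInter₂.2 fun s _ => s.2.2,
    disjoint_compl_left_iff_subset.1 (disjoint_iff_inter_eq_empty.2 hu)⟩

theorem IsCompact.exists_isOpen_isClosed_inter_of_connectedComponentIn_subset {X : Type*}
    [TopologicalSpace X] [T2Space X] {A O : Set X} (hA : IsCompact A) (hO : IsOpen O)
    {x : X} (hx : x ∈ A) (h : connectedComponentIn A x ⊆ O) :
    ∃ W, IsOpen W ∧ W ⊆ O ∧ IsClosed (W ∩ A) ∧ connectedComponentIn A x ⊆ W := by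
  have := isCompact_iff_compactSpace.1 hA
  rw [connectedComponentIn_eq_image hx] at h ⊢
  obtain ⟨V, hVc, hxV, hVO⟩ := exists_isClopen_subset_of_connectedComponent_subset
    (hO.preimage continuous_subtype_val) (image_subset_iff.1 h)
  obtain ⟨W, hW, rfl⟩ := isOpen_induced_iff.1 hVc.isOpen
  have hWA : W ∩ O ∩ A = (↑) '' ((↑) ⁻¹' W : Set A) := by
    rw [Subtype.image_preimage_coe]
    exact Subset.antisymm (fun y hy => ⟨hy.2, hy.1.1⟩)
      (fun y hy => ⟨⟨hy.2, hVO (show (⟨y, hy.1⟩ : A) ∈ (↑) ⁻¹' W from hy.2)⟩, hy.1⟩)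
  refine ⟨W ∩ O, hW.inter hO, inter_subset_right, ?_, ?_⟩
  · rw [hWA]
    exact (hVc.isClosed.isCompact.image continuous_subtype_val).isClosed
  · rintro _ ⟨y, hy, rfl⟩
    exact ⟨hVc.connectedComponent_subset hxV hy, hVO (hVc.connectedComponent_subset hxV hy)⟩

theorem connectedComponentIn_subset_of_inter_subset {X : Type*} [TopologicalSpace X]
    {E S W : Set X} (hS : IsClosed S) (hW : IsOpen W) (hSW : S ⊆ W) (hWS : E ∩ W ⊆ S)
    {x : X} (hxE : x ∈ E) (hxS : x ∈ S) : connectedComponentIn E x ⊆ S := by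
  have hCE := connectedComponentIn_subset E x
  have hcover : connectedComponentIn E x ⊆ W ∪ Sᶜ := fun y hy =>
    (em (y ∈ S)).imp (fun h => hSW h) id
  have hdisj : connectedComponentIn E x ∩ (W ∩ Sᶜ) = ∅ :=
    eq_empty_of_forall_notMem fun y hy => hy.2.2 (hWS ⟨hCE hy.1, hy.2.1⟩)
  rcases isPreconnected_iff_subset_of_disjoint.1 isPreconnected_connectedComponentIn W Sᶜ hW
    hS.isOpen_compl hcover hdisj with hsub | hsub
  · exact fun y hy => hWS ⟨hCE hy, hsub hy⟩
  · exact absurd hxS (hsub (mem_connectedComponentIn hxE))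

section UnitCube

variable {d : ℕ}

theorem unitCube_eq_pi : unitCube d = univ.pi fun _ => Icc (0 : ℝ) 1 := by
  ext x; exact mem_univ_pi.symm

theorem isCompact_unitCube : IsCompact (unitCube d) := by
  rw [unitCube_eq_pi]; exact isCompact_univ_pi fun _ => isCompact_Icc

theorem isPreconnected_unitCube : IsPreconnected (unitCube d) := by
  rw [unitCube_eq_pi]; exact (convex_pi fun _ _ => convex_Icc (0 : ℝ) 1).isPreconnected

theorem zero_mem_unitCube : (0 : Fin d → ℝ) ∈ unitCube d := fun _ => ⟨le_rfl, zero_le_one⟩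

theorem mem_interior_unitCube {x : Fin d → ℝ} :
    x ∈ interior (unitCube d) ↔ ∀ i, x i ∈ Ioo (0 : ℝ) 1 := by
  rw [unitCube_eq_pi, interior_pi_set finite_univ]
  simp only [interior_Icc, mem_univ_pi]

theorem dist_le_one_of_mem_unitCube {x y : Fin d → ℝ} (hx : x ∈ unitCube d)
    (hy : y ∈ unitCube d) : dist x y ≤ 1 := by
  refine (dist_pi_le_iff zero_le_one).2 fun i => ?_
  obtain ⟨hx0, hx1⟩ := hx i
  obtain ⟨hy0, hy1⟩ := hy i
  rw [Real.dist_eq, abs_le]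
  constructor <;> linarith

end UnitCube

/-- `f` maps `[0,1]^d` onto one of the cubes of side `n⁻ʲ` of the grid subdividing `[0,1]^d`. -/
def IsGridMap {d : ℕ} (n j : ℕ) (f : (Fin d → ℝ) → Fin d → ℝ) : Prop :=
  ∃ c : Fin d → ℕ, (∀ i, c i < n ^ j) ∧ ∀ x, f x = ((n : ℝ) ^ j)⁻¹ • (x + fun i => (c i : ℝ))

namespace IsGridMap

variable {d n j : ℕ} {f g : (Fin d → ℝ) → Fin d → ℝ}

theorem id : IsGridMap (d := d) n 0 id :=
  ⟨0, fun _ => by simp, fun x => by ext; simp⟩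

theorem comp (hn : n ≠ 0) {a b : ℕ} (hg : IsGridMap n a g) (hf : IsGridMap n b f) :
    IsGridMap n (a + b) (g ∘ f) := by
  obtain ⟨c, hc, hg⟩ := hg
  obtain ⟨c', hc', hf⟩ := hf
  refine ⟨fun i => c' i + n ^ b * c i, fun i => ?_, fun x => ?_⟩
  · calc c' i + n ^ b * c i < n ^ b * (c i + 1) := by linarith [hc' i]
      _ ≤ n ^ b * n ^ a := Nat.mul_le_mul_left _ (hc i)
      _ = n ^ (a + b) := by ring
  · have hn' : (n : ℝ) ≠ 0 := Nat.cast_ne_zero.2 hn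
    ext i
    simp only [Function.comp_apply, hg, hf, Pi.smul_apply, Pi.add_apply, smul_eq_mul]
    push_cast
    field_simp
    ring

theorem iterate (hn : n ≠ 0) (hf : IsGridMap n j f) (m : ℕ) : IsGridMap n (j * m) f^[m] := by
  induction m with
  | zero => exact id
  | succ m ih => rw [Function.iterate_succ', mul_add_one, add_comm]; exact hf.comp hn ih

theorem dist_eq (hf : IsGridMap n j f) (x y : Fin d → ℝ) :
    dist (f x) (f y) = ((n : ℝ) ^ j)⁻¹ * dist x y := by
  obtain ⟨c, -, hf⟩ := hf
  rw [hf, hf, dist_smul₀, dist_add_right, Real.norm_of_nonneg (by positivity)]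

theorem lipschitzWith (hf : IsGridMap n j f) : LipschitzWith ((n : NNReal) ^ j)⁻¹ f :=
  LipschitzWith.of_dist_le_mul fun x y => by rw [hf.dist_eq]; push_cast; rfl

theorem continuous (hf : IsGridMap n j f) : Continuous f :=
  hf.lipschitzWith.continuous

theorem contractingWith (hn : 2 ≤ n) (hj : 0 < j) (hf : IsGridMap n j f) :
    ContractingWith ((n : NNReal) ^ j)⁻¹ f :=
  ⟨inv_lt_one_of_one_lt₀ (one_lt_pow₀ (by exact_mod_cast hn) hj.ne'), hf.lipschitzWith⟩

theorem isOpenMap (hn : n ≠ 0) (hf : IsGridMap n j f) : IsOpenMap f := by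
  obtain ⟨c, -, hf⟩ := hf
  rw [show f = _ from funext hf]
  exact (isOpenMap_smul₀ (by positivity)).comp (isOpenMap_add_right _)

theorem mapsTo_unitCube (hf : IsGridMap n j f) : MapsTo f (unitCube d) (unitCube d) := by
  obtain ⟨c, hc, hf⟩ := hf
  intro x hx i
  have hcn : (c i : ℝ) + 1 ≤ (n : ℝ) ^ j := by exact_mod_cast hc i
  have hpos : (0 : ℝ) < (n : ℝ) ^ j := by linarith [(c i).cast_nonneg (α := ℝ)]
  rw [hf]
  simp only [Pi.smul_apply, Pi.add_apply, smul_eq_mul, ← div_eq_inv_mul]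
  obtain ⟨hx0, hx1⟩ := hx i
  exact ⟨div_nonneg (by positivity) hpos.le, (div_le_one hpos).2 (by linarith)⟩

theorem dist_le_of_mem_image (hf : IsGridMap n j f) {x y : Fin d → ℝ}
    (hx : x ∈ f '' unitCube d) (hy : y ∈ f '' unitCube d) : dist x y ≤ ((n : ℝ) ^ j)⁻¹ := by
  obtain ⟨x, hx, rfl⟩ := hx
  obtain ⟨y, hy, rfl⟩ := hy
  rw [hf.dist_eq]
  exact mul_le_of_le_one_right (by positivity) (dist_le_one_of_mem_unitCube hx hy)

/-- Two grid cubes of the same level meet only in their boundaries. -/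
theorem eq_of_apply_eq (hn : n ≠ 0) (hf : IsGridMap n j f) (hg : IsGridMap n j g)
    {y z : Fin d → ℝ} (hy : y ∈ unitCube d) (hz : z ∈ interior (unitCube d))
    (h : f y = g z) : y = z := by
  obtain ⟨c, -, hf⟩ := hf
  obtain ⟨c', -, hg⟩ := hg
  rw [hf, hg] at h
  have h' := smul_right_injective _ (by positivity : ((n : ℝ) ^ j)⁻¹ ≠ 0) h
  funext i
  have hi : y i + c i = z i + c' i := congrFun h' i
  obtain ⟨hy0, hy1⟩ := hy i
  obtain ⟨hz0, hz1⟩ := mem_interior_unitCube.1 hz i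
  have hcc : c i = c' i := by
    rcases lt_trichotomy (c i) (c' i) with hlt | heq | hlt
    · have : (c i : ℝ) + 1 ≤ c' i := by exact_mod_cast hlt
      linarith
    · exact heq
    · have : (c' i : ℝ) + 1 ≤ c i := by exact_mod_cast hlt
      linarith
  rw [hcc] at hi
  linarith

end IsGridMap

def IsGridSelfSimilar {d : ℕ} (n : ℕ) (E : Set (Fin d → ℝ)) : Prop :=
  ∀ m, ∀ x ∈ E, ∃ f, IsGridMap n m f ∧ x ∈ f '' E

namespace IsGridSelfSimilar

variable {d n : ℕ} {E : Set (Fin d → ℝ)}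

theorem subset_unitCube (hn : 2 ≤ n) (hE : IsGridSelfSimilar n E)
    (hb : Bornology.IsBounded E) : E ⊆ unitCube d := by
  obtain ⟨R, hR⟩ := hb.subset_closedBall 0
  intro x hx
  rw [← isCompact_unitCube.isClosed.closure_eq,
    Metric.mem_closure_iff_infDist_zero ⟨0, zero_mem_unitCube⟩]
  refine le_antisymm (nonpos_of_forall_le_inv_pow_mul (r := n) (C := R) (by exact_mod_cast hn)
    fun m => ?_) Metric.infDist_nonneg
  obtain ⟨f, hf, y, hy, rfl⟩ := hE m x hx
  calc Metric.infDist (f y) (unitCube d)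
      ≤ dist (f y) (f 0) := Metric.infDist_le_dist_of_mem (hf.mapsTo_unitCube zero_mem_unitCube)
    _ = ((n : ℝ) ^ m)⁻¹ * dist y 0 := hf.dist_eq y 0
    _ ≤ ((n : ℝ) ^ m)⁻¹ * R := by gcongr; exact hR hy

theorem inter_image_subset (hn : n ≠ 0) (hE : IsGridSelfSimilar n E) (hEQ : E ⊆ unitCube d)
    {O : Set (Fin d → ℝ)} (hOQ : O ⊆ interior (unitCube d)) {j : ℕ}
    {g : (Fin d → ℝ) → Fin d → ℝ} (hg : IsGridMap n j g) : E ∩ g '' O ⊆ g '' (O ∩ E) := by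
  rintro _ ⟨hx, w, hw, rfl⟩
  obtain ⟨h, hh, y, hy, hyw⟩ := hE j _ hx
  obtain rfl := hh.eq_of_apply_eq hn hg (hEQ hy) (hOQ hw) hyw
  exact ⟨y, ⟨hw, hy⟩, rfl⟩

theorem connectedComponentIn_eq_singleton (hn : 2 ≤ n) (hE : IsGridSelfSimilar n E)
    (hEQ : E ⊆ unitCube d) {A O : Set (Fin d → ℝ)} (hEA : E ⊆ A) (hO : IsOpen O)
    (hOQ : O ⊆ interior (unitCube d)) (hOA : IsClosed (O ∩ A)) {k : ℕ} (hk : 0 < k)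
    {f : (Fin d → ℝ) → Fin d → ℝ} (hf : IsGridMap n k f) (hfQ : f '' unitCube d ⊆ O ∩ A)
    {x : Fin d → ℝ} (hxE : x ∈ E) (hfx : f x = x) : connectedComponentIn E x = {x} := by
  have hn0 : n ≠ 0 := by omega
  have hVQ : O ∩ A ⊆ unitCube d := inter_subset_left.trans (hOQ.trans interior_subset)
  have hV : IsCompact (O ∩ A) := isCompact_unitCube.of_isClosed_subset hOA hVQ
  have hsub : ∀ m, connectedComponentIn E x ⊆ f^[m] '' (O ∩ A) := fun m => by
    have hg := hf.iterate hn0 m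
    refine connectedComponentIn_subset_of_inter_subset
      (hV.image hg.continuous).isClosed (hg.isOpenMap hn0 O hO)
      (image_mono inter_subset_left) ?_ hxE
      ⟨x, hfQ ⟨x, hEQ hxE, hfx⟩, Function.iterate_fixed hfx m⟩
    exact (hE.inter_image_subset hn0 hEQ hOQ hg).trans
      (image_mono (inter_subset_inter_right _ hEA))
  refine Subset.antisymm (fun y hy => ?_) (singleton_subset_iff.2 (mem_connectedComponentIn hxE))
  refine dist_le_zero.1 (nonpos_of_forall_le_inv_pow_mul (C := 1)
    (one_lt_pow₀ (by exact_mod_cast hn : (1 : ℝ) < n) hk.ne') fun m => ?_)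
  rw [mul_one, ← pow_mul]
  exact (hf.iterate hn0 m).dist_le_of_mem_image (image_mono hVQ (hsub m hy))
    ⟨x, hEQ hxE, Function.iterate_fixed hfx m⟩

end IsGridSelfSimilar

section WordMap

variable {ι X : Type*}

def wordMap (φ : ι → X → X) (σ : List ι) : X → X := σ.foldr (fun j f => φ j ∘ f) id

variable {φ : ι → X → X}

theorem mapsTo_wordMap {s : Set X} (h : ∀ j, MapsTo (φ j) s s) (σ : List ι) :
    MapsTo (wordMap φ σ) s s := by
  induction σ with
  | nil => exact mapsTo_id s
  | cons j σ ih => exact (h j).comp ih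

theorem continuous_wordMap [TopologicalSpace X] (h : ∀ j, Continuous (φ j)) (σ : List ι) :
    Continuous (wordMap φ σ) := by
  induction σ with
  | nil => exact continuous_id
  | cons j σ ih => exact (h j).comp ih

theorem isCompact_iUnion_wordMap_image [TopologicalSpace X] [Finite ι]
    (h : ∀ j, Continuous (φ j)) {K : Set X} (hK : IsCompact K) (k : ℕ) :
    IsCompact (⋃ (σ : List ι) (_ : σ.length = k), wordMap φ σ '' K) :=
  (List.finite_length_eq ι k).isCompact_biUnion fun σ _ => hK.image (continuous_wordMap h σ)

variable {E : Set X}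

theorem mapsTo_of_eq_iUnion_image (hE : E = ⋃ j, φ j '' E) (j : ι) : MapsTo (φ j) E E :=
  fun y hy => by rw [hE]; exact mem_iUnion.2 ⟨j, mem_image_of_mem _ hy⟩

theorem exists_mem_wordMap_image_of_eq_iUnion_image (hE : E = ⋃ j, φ j '' E) (m : ℕ)
    {x : X} (hx : x ∈ E) : ∃ σ : List ι, σ.length = m ∧ x ∈ wordMap φ σ '' E := by
  induction m generalizing x with
  | zero => exact ⟨[], rfl, x, hx, rfl⟩
  | succ m ih =>
    rw [hE] at hx
    obtain ⟨j, y, hy, rfl⟩ := mem_iUnion.1 hx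
    obtain ⟨σ, hσ, z, hz, rfl⟩ := ih hy
    exact ⟨j :: σ, by simp [hσ], z, hz, rfl⟩

theorem subset_iUnion_wordMap_image_of_eq_iUnion_image (hE : E = ⋃ j, φ j '' E) {K : Set X}
    (hEK : E ⊆ K) (m : ℕ) : E ⊆ ⋃ (σ : List ι) (_ : σ.length = m), wordMap φ σ '' K :=
  fun _ hx =>
    let ⟨σ, hσ, y, hy, hyx⟩ := exists_mem_wordMap_image_of_eq_iUnion_image hE m hx
    mem_iUnion₂.2 ⟨σ, hσ, y, hEK hy, hyx⟩

end WordMap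

section Digits

variable {ι : Type*} {d n : ℕ} {D : ι → Fin d → ℝ} {φ : ι → (Fin d → ℝ) → Fin d → ℝ}

theorem isGridMap_of_digits (hD : ∀ j i, ∃ m : ℕ, m < n ∧ D j i = m)
    (hφ : ∀ j x, φ j x = (n : ℝ)⁻¹ • (x + D j)) (j : ι) : IsGridMap n 1 (φ j) := by
  choose c hc using hD j
  refine ⟨c, fun i => by simpa using (hc i).1, fun x => ?_⟩
  rw [hφ, pow_one]
  congr 2
  exact funext fun i => (hc i).2

theorem isGridMap_wordMap (hn : n ≠ 0) (hD : ∀ j i, ∃ m : ℕ, m < n ∧ D j i = m)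
    (hφ : ∀ j x, φ j x = (n : ℝ)⁻¹ • (x + D j)) (σ : List ι) :
    IsGridMap n σ.length (wordMap φ σ) := by
  induction σ with
  | nil => exact IsGridMap.id
  | cons j σ ih =>
    rw [List.length_cons, add_comm]
    exact (isGridMap_of_digits hD hφ j).comp hn ih

theorem isGridSelfSimilar_of_eq_iUnion_image (hn : n ≠ 0)
    (hD : ∀ j i, ∃ m : ℕ, m < n ∧ D j i = m) (hφ : ∀ j x, φ j x = (n : ℝ)⁻¹ • (x + D j))
    {E : Set (Fin d → ℝ)} (hE : E = ⋃ j, φ j '' E) : IsGridSelfSimilar n E := fun m _ hx =>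
  let ⟨σ, hσ, hxσ⟩ := exists_mem_wordMap_image_of_eq_iUnion_image hE m hx
  ⟨_, hσ ▸ isGridMap_wordMap hn hD hφ σ, hxσ⟩

end Digits

theorem island_implies_trivial_point
    (d n N : ℕ) (hn : 2 ≤ n)
    (D : Fin N → (Fin d → ℝ))
    (hD : ∀ j i, ∃ m : ℕ, m < n ∧ D j i = (m : ℝ))
    (φ : Fin N → (Fin d → ℝ) → (Fin d → ℝ))
    (hφ : ∀ j x, φ j x = (n : ℝ)⁻¹ • (x + D j))
    (E : Set (Fin d → ℝ)) (hEne : E.Nonempty) (hEc : IsCompact E)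
    (hE : E = ⋃ j, φ j '' E)
    -- the `k`-th approximations
    (Eapprox : ℕ → Set (Fin d → ℝ))
    (hEapprox : ∀ k, Eapprox k =
      ⋃ (σ : List (Fin N)) (_ : σ.length = k),
        (σ.foldr (fun j f => φ j ∘ f) id) '' unitCube d)
    -- a `k`-th island for some `k > 0`
    (k : ℕ) (hk : 0 < k) (U : Set (Fin d → ℝ))
    (hUcomp : ∃ x ∈ Eapprox k, U = connectedComponentIn (Eapprox k) x)
    (hUisland : U ∩ frontier (unitCube d) = ∅) :
    ∃ x ∈ E, connectedComponentIn E x = {x} := by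
  obtain ⟨x₀, hx₀, rfl⟩ := hUcomp
  set A := ⋃ (σ : List (Fin N)) (_ : σ.length = k), wordMap φ σ '' unitCube d
  rw [show Eapprox k = A from hEapprox k] at hx₀ hUisland
  have hn0 : n ≠ 0 := by omega
  have hgrid := isGridMap_wordMap hn0 hD hφ
  have hself := isGridSelfSimilar_of_eq_iUnion_image hn0 hD hφ hE
  have hEQ := hself.subset_unitCube hn hEc.isBounded
  have hA : IsCompact A := isCompact_iUnion_wordMap_image
    (fun j => (isGridMap_of_digits hD hφ j).continuous) isCompact_unitCube k
  have hAQ : A ⊆ unitCube d := iUnion₂_subset fun σ _ => (hgrid σ).mapsTo_unitCube.image_subset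
  have hUint : connectedComponentIn A x₀ ⊆ interior (unitCube d) := by
    rw [← self_sdiff_frontier]
    exact subset_sdiff.2 ⟨(connectedComponentIn_subset _ _).trans hAQ,
      disjoint_iff_inter_eq_empty.2 hUisland⟩
  obtain ⟨O, hO, hOQ, hOA, hUO⟩ :=
    hA.exists_isOpen_isClosed_inter_of_connectedComponentIn_subset isOpen_interior hx₀ hUint
  obtain ⟨σ, hσ, hx₀σ⟩ := mem_iUnion₂.1 hx₀
  have hf : IsGridMap n k (wordMap φ σ) := hσ ▸ hgrid σ
  have hcellA : wordMap φ σ '' unitCube d ⊆ A := subset_iUnion₂_of_subset σ hσ subset_rfl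
  have hcell : wordMap φ σ '' unitCube d ⊆ O ∩ A := subset_inter
    (((isPreconnected_unitCube.image _ hf.continuous.continuousOn).subset_connectedComponentIn
      hx₀σ hcellA).trans hUO) hcellA
  have hcontr := hf.contractingWith hn hk
  have hxE := hcontr.fixedPoint_mem hEc.isClosed
    (mapsTo_wordMap (mapsTo_of_eq_iUnion_image hE) σ) hEne.some_mem
  exact ⟨_, hxE, hself.connectedComponentIn_eq_singleton hn hEQ
    (subset_iUnion_wordMap_image_of_eq_iUnion_image hE hEQ k) hO hOQ hOA hk hf hcell hxE
    (ContractingWith.fixedPoint_isFixedPt hcontr)⟩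
end

section
/- There exists a self-similar set Q ⊆ ℝ satisfying the open set condition that has exactly one trivial point and satisfies 𝓘_c(Q) = dim_H Q = 1. Concretely, Q = {0} ∪ ⋃_{k=0}^∞ [1/2^{2k+1}, 1/2^{2k}] satisfies Q = (Q/4) ∪ (Q/4 + 1/2) ∪ (Q/2 + 1/2), its unique trivial point is 0, and dim_H (Q \ {0}) = 1. -/
open Set

private lemma aux_mono {m n : ℕ} (h : m ≤ n) : (1:ℝ)/2^n ≤ 1/2^m :=
  one_div_le_one_div_of_le (pow_pos two_pos m) (pow_le_pow_right₀ one_le_two h)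

private lemma aux_lt {m n : ℕ} (h : m < n) : (1:ℝ)/2^n < 1/2^m :=
  one_div_lt_one_div_of_lt (pow_pos two_pos m) (pow_lt_pow_right₀ one_lt_two h)

private lemma aux1 (n : ℕ) : (1:ℝ)/2^(n+1) = (1/2^n)/2 := by rw [pow_succ]; ring

private lemma aux2 (n : ℕ) : (1:ℝ)/2^(n+2) = (1/2^n)/4 := by
  rw [pow_add]; norm_num; ring

private lemma aux_pos (n : ℕ) : (0:ℝ) < 1/2^n := by positivity

private lemma aux_exists {t : ℝ} (h : 0 < t) : ∃ n : ℕ, (1:ℝ)/2^(n+2) ≤ t := by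
  obtain ⟨n, hn⟩ := exists_pow_lt_of_lt_one h (show (1/2:ℝ) < 1 by norm_num)
  refine ⟨n, le_of_lt (lt_of_le_of_lt ?_ hn)⟩
  rw [← one_div_pow]
  exact pow_le_pow_of_le_one (by norm_num) (by norm_num) (by omega)

private lemma aux_dimH (s : Set ℝ) (hs : Ioo (1/2:ℝ) 1 ⊆ s) : dimH s = 1 := by
  have h : (interior s).Nonempty :=
    ⟨3/4, (isOpen_Ioo.subset_interior_iff).mpr hs (by norm_num)⟩
  have := Real.dimH_of_nonempty_interior h
  simpa using this

theorem Q_self_similar_no_dimension_drop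
    (Q : Set ℝ)
    (hQ : Q = {0} ∪ ⋃ k : ℕ, Icc ((1:ℝ)/2^(2*k+1)) ((1:ℝ)/2^(2*k))) :
    -- `Q` is the attractor of the IFS `{x/4, x/4 + 1/2, x/2 + 1/2}`
    (Q = (fun x : ℝ => x/4) '' Q ∪ (fun x : ℝ => x/4 + 1/2) '' Q ∪
        (fun x : ℝ => x/2 + 1/2) '' Q) ∧
    -- the IFS satisfies the open set condition
    (∃ U : Set ℝ, IsOpen U ∧ U.Nonempty ∧
      (fun x : ℝ => x/4) '' U ⊆ U ∧ (fun x : ℝ => x/4 + 1/2) '' U ⊆ U ∧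
      (fun x : ℝ => x/2 + 1/2) '' U ⊆ U ∧
      (fun x : ℝ => x/4) '' U ∩ (fun x : ℝ => x/4 + 1/2) '' U = ∅ ∧
      (fun x : ℝ => x/4) '' U ∩ (fun x : ℝ => x/2 + 1/2) '' U = ∅ ∧
      (fun x : ℝ => x/4 + 1/2) '' U ∩ (fun x : ℝ => x/2 + 1/2) '' U = ∅) ∧
    -- `0` is the unique trivial point of `Q`
    (connectedComponentIn Q 0 = {0}) ∧
    (∀ x ∈ Q, x ≠ 0 → connectedComponentIn Q x ≠ {x}) ∧
    -- the connectedness index equals the Hausdorff dimension, which is `1`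
    dimH (Q \ {0}) = 1 ∧ dimH Q = 1 := by
  have h0Q : (0:ℝ) ∈ Q := by rw [hQ]; left; rfl
  have hmemI : ∀ k : ℕ, ∀ z : ℝ, z ∈ Icc ((1:ℝ)/2^(2*k+1)) ((1:ℝ)/2^(2*k)) → z ∈ Q := by
    intro k z hz
    rw [hQ]; right; exact mem_iUnion.mpr ⟨k, hz⟩
  have hQ01 : Q ⊆ Icc 0 1 := by
    rw [hQ]
    rintro y (rfl | hy)
    · exact ⟨le_refl 0, zero_le_one⟩
    · obtain ⟨k, hk1, hk2⟩ := mem_iUnion.mp hy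
      refine ⟨(le_of_lt (lt_of_lt_of_le (aux_pos _) hk1)), le_trans hk2 ?_⟩
      have := aux_mono (Nat.zero_le (2*k))
      simpa using this
  -- Part 1
  have part1 : Q = (fun x : ℝ => x/4) '' Q ∪ (fun x : ℝ => x/4 + 1/2) '' Q ∪
      (fun x : ℝ => x/2 + 1/2) '' Q := by
    apply Subset.antisymm
    · intro y hy
      rw [hQ] at hy
      rcases hy with rfl | hy
      · exact Or.inl (Or.inl ⟨0, h0Q, by norm_num⟩)
      · obtain ⟨k, hk1, hk2⟩ := mem_iUnion.mp hy
        rcases k with _ | k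
        · -- y ∈ [1/2, 1], the hard case
          have hy1 : (1:ℝ)/2 ≤ y := by
            have : (1:ℝ)/2^(2*0+1) = 1/2 := by norm_num
            linarith [this ▸ hk1]
          have hy2 : y ≤ 1 := by
            have : (1:ℝ)/2^(2*0) = 1 := by norm_num
            linarith [this ▸ hk2]
          set t : ℝ := y - 1/2 with ht
          have ht1 : 0 ≤ t := by simp [ht]; linarith
          have ht2 : t ≤ 1/2 := by simp [ht]; linarith
          rcases eq_or_lt_of_le ht1 with h0 | h0
          · -- t = 0, y = 1/2 = f3 0
            refine Or.inr ⟨0, h0Q, ?_⟩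
            simp only
            have : y = 1/2 := by simp [ht] at h0; linarith
            rw [this]; norm_num
          · -- t > 0
            classical
            have hP : ∃ n : ℕ, (1:ℝ)/2^(n+2) ≤ t := aux_exists h0
            set m : ℕ := Nat.find hP + 1 with hm
            have h1 : (1:ℝ)/2^(m+1) ≤ t := Nat.find_spec hP
            have h2 : t ≤ (1:ℝ)/2^m := by
              rcases Nat.eq_zero_or_pos (Nat.find hP) with hz | hz
              · rw [hm, hz]; norm_num; linarith
              · obtain ⟨j, hj⟩ := Nat.exists_eq_succ_of_ne_zero (Nat.pos_iff_ne_zero.mp hz)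
                have hmin := Nat.find_min hP (show j < Nat.find hP by omega)
                push_neg at hmin
                have : m = j + 2 := by omega
                rw [this]
                exact le_of_lt hmin
            rcases Nat.even_or_odd m with ⟨c, hc⟩ | ⟨c, hc⟩
            · -- m even: m = 2j+2 with j = c-1 (m ≥ 1 so c ≥ 1)
              have hc1 : 1 ≤ c := by omega
              obtain ⟨j, hj⟩ : ∃ j, m = 2*j + 2 := ⟨c - 1, by omega⟩
              rw [hj] at h1 h2
              refine Or.inl (Or.inr ⟨4*t, hmemI j _ ⟨?_, ?_⟩, ?_⟩)
              · have := aux2 (2*j+1)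
                have heq : 2*j+1+2 = 2*j+2+1 := by omega
                rw [heq] at this
                rw [this] at h1; linarith
              · have := aux2 (2*j)
                rw [this] at h2; linarith
              · simp only; linarith
            · -- m odd: m = 2c+1
              rw [hc] at h1 h2
              refine Or.inr ⟨2*t, hmemI c _ ⟨?_, ?_⟩, ?_⟩
              · have := aux1 (2*c+1)
                rw [this] at h1; linarith
              · have := aux1 (2*c)
                rw [this] at h2; linarith
              · simp only; linarith
        · -- y ∈ I (k+1), so y = f1 (4y)
          refine Or.inl (Or.inl ⟨4*y, hmemI k _ ⟨?_, ?_⟩, ?_⟩)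
          · have := aux2 (2*k+1)
            have heq : 2*k+1+2 = 2*(k+1)+1 := by omega
            rw [heq] at this
            rw [this] at hk1; linarith
          · have := aux2 (2*k)
            have heq : 2*k+2 = 2*(k+1) := by omega
            rw [heq] at this
            rw [this] at hk2; linarith
          · simp only; ring
    · rintro y ((⟨x, hx, rfl⟩ | ⟨x, hx, rfl⟩) | ⟨x, hx, rfl⟩)
      · -- f1
        rw [hQ] at hx
        rcases hx with rfl | hx
        · simpa using h0Q
        · obtain ⟨k, hk1, hk2⟩ := mem_iUnion.mp hx
          refine hmemI (k+1) _ ⟨?_, ?_⟩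
          · have := aux2 (2*k+1)
            have heq : 2*k+1+2 = 2*(k+1)+1 := by omega
            rw [heq] at this
            rw [this]; linarith
          · have := aux2 (2*k)
            have heq : 2*k+2 = 2*(k+1) := by omega
            rw [heq] at this
            rw [this]; linarith
      · -- f2
        obtain ⟨hx0, hx1⟩ := hQ01 hx
        refine hmemI 0 _ ⟨?_, ?_⟩ <;> · norm_num; linarith
      · -- f3
        obtain ⟨hx0, hx1⟩ := hQ01 hx
        refine hmemI 0 _ ⟨?_, ?_⟩ <;> · norm_num; linarith
  refine ⟨part1, ?_, ?_, ?_, ?_, ?_⟩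
  · -- open set condition
    refine ⟨⋃ k : ℕ, Ioo ((1:ℝ)/2^(2*k+1)) ((1:ℝ)/2^(2*k)), isOpen_iUnion fun _ => isOpen_Ioo,
      ⟨3/4, mem_iUnion.mpr ⟨0, by norm_num⟩⟩, ?_, ?_, ?_, ?_, ?_, ?_⟩
    · rintro _ ⟨x, hx, rfl⟩
      obtain ⟨k, hk1, hk2⟩ := mem_iUnion.mp hx
      refine mem_iUnion.mpr ⟨k+1, ?_, ?_⟩ <;> simp only
      · have := aux2 (2*k+1)
        have heq : 2*k+1+2 = 2*(k+1)+1 := by omega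
        rw [heq] at this; rw [this]; linarith
      · have := aux2 (2*k)
        have heq : 2*k+2 = 2*(k+1) := by omega
        rw [heq] at this; rw [this]; linarith
    · rintro _ ⟨x, hx, rfl⟩
      obtain ⟨k, hk1, hk2⟩ := mem_iUnion.mp hx
      have hx0 : 0 < x := lt_trans (aux_pos _) hk1
      have hx1 : x < 1 := lt_of_lt_of_le hk2 (by simpa using aux_mono (Nat.zero_le (2*k)))
      exact mem_iUnion.mpr ⟨0, by norm_num; constructor <;> linarith⟩
    · rintro _ ⟨x, hx, rfl⟩
      obtain ⟨k, hk1, hk2⟩ := mem_iUnion.mp hx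
      have hx0 : 0 < x := lt_trans (aux_pos _) hk1
      have hx1 : x < 1 := lt_of_lt_of_le hk2 (by simpa using aux_mono (Nat.zero_le (2*k)))
      exact mem_iUnion.mpr ⟨0, by norm_num; constructor <;> linarith⟩
    · -- f1 ∩ f2 = ∅
      rw [eq_empty_iff_forall_notMem]
      rintro y ⟨⟨a, ha, rfl⟩, ⟨b, hb, hab⟩⟩
      obtain ⟨k, hk1, hk2⟩ := mem_iUnion.mp ha
      obtain ⟨j, hj1, hj2⟩ := mem_iUnion.mp hb
      have ha1 : a < 1 := lt_of_lt_of_le hk2 (by simpa using aux_mono (Nat.zero_le (2*k)))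
      have hb0 : 0 < b := lt_trans (aux_pos _) hj1
      simp only at hab; linarith
    · -- f1 ∩ f3 = ∅
      rw [eq_empty_iff_forall_notMem]
      rintro y ⟨⟨a, ha, rfl⟩, ⟨b, hb, hab⟩⟩
      obtain ⟨k, hk1, hk2⟩ := mem_iUnion.mp ha
      obtain ⟨j, hj1, hj2⟩ := mem_iUnion.mp hb
      have ha1 : a < 1 := lt_of_lt_of_le hk2 (by simpa using aux_mono (Nat.zero_le (2*k)))
      have hb0 : 0 < b := lt_trans (aux_pos _) hj1
      simp only at hab; linarith
    · -- f2 ∩ f3 = ∅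
      rw [eq_empty_iff_forall_notMem]
      rintro y ⟨⟨a, ha, rfl⟩, ⟨b, hb, hab⟩⟩
      obtain ⟨k, hk1, hk2⟩ := mem_iUnion.mp ha
      obtain ⟨j, hj1, hj2⟩ := mem_iUnion.mp hb
      simp only at hab
      -- a/4 = b/2, a/4 ∈ (1/2^(2k+3), 1/2^(2k+2)), b/2 ∈ (1/2^(2j+2), 1/2^(2j+1))
      have e1 : (1:ℝ)/2^(2*k+2+1) < a/4 := by
        have := aux2 (2*k+1)
        have heq : 2*k+1+2 = 2*k+2+1 := by omega
        rw [heq] at this; rw [this]; linarith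
      have e2 : a/4 < (1:ℝ)/2^(2*k+2) := by
        have := aux2 (2*k); rw [this]; linarith
      have e3 : (1:ℝ)/2^(2*j+1+1) < b/2 := by
        have := aux1 (2*j+1); rw [this]; linarith
      have e4 : b/2 < (1:ℝ)/2^(2*j+1) := by
        have := aux1 (2*j); rw [this]; linarith
      have hab' : a/4 = b/2 := by linarith
      rcases lt_trichotomy (2*k+2) (2*j+1) with h | h | h
      · have := aux_mono (show 2*k+2+1 ≤ 2*j+1 by omega)
        linarith
      · omega
      · have := aux_mono (show 2*j+1+1 ≤ 2*k+2 by omega)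
        linarith
  · -- connectedComponentIn Q 0 = {0}
    apply Subset.antisymm
    · intro y hy
      by_contra hne
      rw [mem_singleton_iff] at hne
      have hyQ : y ∈ Q := connectedComponentIn_subset Q 0 hy
      have hy0 : 0 < y := by
        rw [hQ] at hyQ
        rcases hyQ with rfl | hyQ
        · exact absurd rfl hne
        · obtain ⟨k, hk1, _⟩ := mem_iUnion.mp hyQ
          exact lt_of_lt_of_le (aux_pos _) hk1
      have hord : OrdConnected (connectedComponentIn Q 0) :=
        (isPreconnected_connectedComponentIn).ordConnected
      have hsub : Icc (0:ℝ) y ⊆ connectedComponentIn Q 0 :=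
        hord.out (mem_connectedComponentIn h0Q) hy
      obtain ⟨n, hn⟩ := exists_pow_lt_of_lt_one hy0 (show (1/2:ℝ) < 1 by norm_num)
      rw [one_div_pow] at hn
      set g : ℝ := 3/2^(2*n+3) with hg
      have hp1 : (1:ℝ)/2^(2*n+1) = 4 * (1/2^(2*n+3)) := by
        have := aux2 (2*n+1)
        have heq : 2*n+1+2 = 2*n+3 := by omega
        rw [heq] at this; rw [this]; ring
      have hp2 : (1:ℝ)/2^(2*n+2) = 2 * (1/2^(2*n+3)) := by
        have := aux1 (2*n+2)
        have heq : 2*n+2+1 = 2*n+3 := by omega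
        rw [heq] at this; rw [this]; ring
      have hgpos : 0 < g := by positivity
      have hg3 : g = 3 * (1/2^(2*n+3)) := by rw [hg]; ring
      have hgy : g ≤ y := by
        have h1 : g < (1:ℝ)/2^(2*n+1) := by
          rw [hg3, hp1]; linarith [aux_pos (2*n+3)]
        have h2 : (1:ℝ)/2^(2*n+1) ≤ 1/2^n := aux_mono (by omega)
        linarith
      have hgQ : g ∈ Q := connectedComponentIn_subset Q 0 (hsub ⟨le_of_lt hgpos, hgy⟩)
      rw [hQ] at hgQ
      rcases hgQ with hg0 | hgU
      · rw [mem_singleton_iff] at hg0; linarith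
      · obtain ⟨j, hj1, hj2⟩ := mem_iUnion.mp hgU
        rcases le_or_gt j n with h | h
        · have := aux_mono (show 2*j+1 ≤ 2*n+1 by omega)
          -- 1/2^(2j+1) ≥ 1/2^(2n+1) = 4/2^(2n+3) > g, contradicting hj1 ≤ g
          rw [hp1] at this
          rw [hg3] at hj1
          linarith [aux_pos (2*n+3)]
        · have := aux_mono (show 2*n+2 ≤ 2*j by omega)
          rw [hp2] at this
          rw [hg3] at hj2
          linarith [aux_pos (2*n+3)]
    · intro y hy
      rw [mem_singleton_iff] at hy
      rw [hy]
      exact mem_connectedComponentIn h0Q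
  · -- no other trivial points
    intro x hxQ hx0 hcomp
    rw [hQ] at hxQ
    rcases hxQ with rfl | hxQ
    · exact hx0 rfl
    · obtain ⟨k, hk⟩ := mem_iUnion.mp hxQ
      have hsub : Icc ((1:ℝ)/2^(2*k+1)) ((1:ℝ)/2^(2*k)) ⊆ connectedComponentIn Q x :=
        (isPreconnected_Icc).subset_connectedComponentIn hk (fun z hz => hmemI k z hz)
      rw [hcomp] at hsub
      have hlt : (1:ℝ)/2^(2*k+1) < 1/2^(2*k) := aux_lt (by omega)
      have e1 := hsub ⟨le_refl _, le_of_lt hlt⟩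
      have e2 := hsub ⟨le_of_lt hlt, le_refl _⟩
      rw [mem_singleton_iff] at e1 e2
      rw [e1, e2] at hlt
      exact lt_irrefl _ hlt
  · -- dimH (Q \ {0}) = 1
    apply aux_dimH
    intro z hz
    refine ⟨hmemI 0 z ⟨?_, ?_⟩, ?_⟩
    · norm_num; linarith [hz.1]
    · norm_num; linarith [hz.2]
    · simp only [mem_singleton_iff]
      intro h; rw [h] at hz; linarith [hz.1]
  · -- dimH Q = 1
    apply aux_dimH
    intro z hz
    refine hmemI 0 z ⟨?_, ?_⟩
    · norm_num; linarith [hz.1]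
    · norm_num; linarith [hz.2]
end

section
/- The set Q = {0} ∪ ⋃_{k=0}^∞ [1/2^{2k+1}, 1/2^{2k}] ⊆ ℝ satisfies the set equation Q = (Q/4) ∪ (Q/4 + 1/2) ∪ (Q/2 + 1/2). -/
open Set

private lemma aux1_s8 (m n : ℕ) (c y : ℝ) (hc : 0 < c) (e : (2:ℝ)^m = c * 2^n) :
    1/2^m ≤ y ↔ 1/2^n ≤ c*y := by
  rw [div_le_iff₀ (pow_pos two_pos m), div_le_iff₀ (pow_pos two_pos n), e]
  constructor <;> intro h <;> nlinarith

private lemma aux2_s8 (m n : ℕ) (c y : ℝ) (hc : 0 < c) (e : (2:ℝ)^m = c * 2^n) :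
    y ≤ 1/2^m ↔ c*y ≤ 1/2^n := by
  rw [le_div_iff₀ (pow_pos two_pos m), le_div_iff₀ (pow_pos two_pos n), e]
  constructor <;> intro h <;> nlinarith

theorem Q_set_equation :
    ({0} ∪ ⋃ k : ℕ, Icc ((1:ℝ)/2^(2*k+1)) ((1:ℝ)/2^(2*k)) : Set ℝ) =
      (fun x : ℝ => x/4) '' ({0} ∪ ⋃ k : ℕ, Icc ((1:ℝ)/2^(2*k+1)) ((1:ℝ)/2^(2*k))) ∪
      (fun x : ℝ => x/4 + 1/2) '' ({0} ∪ ⋃ k : ℕ, Icc ((1:ℝ)/2^(2*k+1)) ((1:ℝ)/2^(2*k))) ∪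
      (fun x : ℝ => x/2 + 1/2) '' ({0} ∪ ⋃ k : ℕ, Icc ((1:ℝ)/2^(2*k+1)) ((1:ℝ)/2^(2*k))) := by
  have hp : ∀ n : ℕ, (0:ℝ) < 2^n := fun n => pow_pos (by norm_num) n
  ext x
  simp only [mem_union, mem_singleton_iff, mem_iUnion, mem_Icc, mem_image]
  constructor
  · rintro (rfl | ⟨k, h1, h2⟩)
    · exact Or.inl (Or.inl ⟨0, Or.inl rfl, by norm_num⟩)
    · rcases k with _ | k
      · -- x ∈ [1/2, 1]
        norm_num at h1 h2
        set y := x - 1/2 with hy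
        have hy0 : 0 ≤ y := by simp only [hy]; linarith
        have hy2 : y ≤ 1/2 := by simp only [hy]; linarith
        rcases eq_or_lt_of_le hy0 with h0 | h0
        · refine Or.inl (Or.inr ⟨0, Or.inl rfl, ?_⟩)
          simp only [hy] at h0; norm_num; linarith
        · have hex : ∃ n : ℕ, (1:ℝ)/2^(n+2) ≤ y := by
            obtain ⟨n, hn⟩ := exists_pow_lt_of_lt_one h0 (by norm_num : (1:ℝ)/2 < 1)
            refine ⟨n, le_trans ?_ hn.le⟩
            rw [div_pow, one_pow]
            exact one_div_le_one_div_of_le (hp n)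
              (pow_le_pow_right₀ (by norm_num) (by omega))
          classical
          set n := Nat.find hex with hn
          have h1' : (1:ℝ)/2^(n+2) ≤ y := Nat.find_spec hex
          have h2' : y ≤ (1:ℝ)/2^(n+1) := by
            rcases Nat.eq_zero_or_pos n with h | h
            · rw [h]; norm_num; linarith
            · have hm := Nat.find_min hex (m := n-1) (by omega)
              push_neg at hm
              have e : n - 1 + 2 = n + 1 := by omega
              rw [e] at hm
              linarith
          rcases Nat.even_or_odd n with ⟨j, hj⟩ | ⟨j, hj⟩
          · refine Or.inr ⟨2*y, Or.inr ⟨j, ?_, ?_⟩, by simp only [hy]; ring⟩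
            · exact (aux1_s8 (n+2) (2*j+1) 2 y two_pos (by rw [hj]; ring)).mp h1'
            · exact (aux2_s8 (n+1) (2*j) 2 y two_pos (by rw [hj]; ring)).mp h2'
          · refine Or.inl (Or.inr ⟨4*y, Or.inr ⟨j, ?_, ?_⟩, by simp only [hy]; ring⟩)
            · exact (aux1_s8 (n+2) (2*j+1) 4 y (by norm_num) (by rw [hj]; ring)).mp h1'
            · exact (aux2_s8 (n+1) (2*j) 4 y (by norm_num) (by rw [hj]; ring)).mp h2'
      · refine Or.inl (Or.inl ⟨4*x, Or.inr ⟨k, ?_, ?_⟩, by ring⟩)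
        · exact (aux1_s8 (2*(k+1)+1) (2*k+1) 4 x (by norm_num) (by ring)).mp h1
        · exact (aux2_s8 (2*(k+1)) (2*k) 4 x (by norm_num) (by ring)).mp h2
  · have key : ∀ q : ℝ, ∀ k : ℕ, 1/2^(2*k+1) ≤ q → q ≤ 1/2^(2*k) → 0 ≤ q ∧ q ≤ 1 := by
      intro q k h1 h2
      constructor
      · exact le_trans (le_of_lt (div_pos one_pos (hp _))) h1
      · refine le_trans h2 ?_
        rw [div_le_one (hp _)]
        exact one_le_pow₀ (by norm_num)
    rintro ((⟨q, hq, rfl⟩ | ⟨q, hq, rfl⟩) | ⟨q, hq, rfl⟩)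
    · rcases hq with rfl | ⟨k, h1, h2⟩
      · exact Or.inl (by norm_num)
      · refine Or.inr ⟨k+1, ?_, ?_⟩
        · refine (aux1_s8 (2*(k+1)+1) (2*k+1) 4 (q/4) (by norm_num) (by ring)).mpr ?_
          rw [show (4:ℝ)*(q/4) = q by ring]; exact h1
        · refine (aux2_s8 (2*(k+1)) (2*k) 4 (q/4) (by norm_num) (by ring)).mpr ?_
          rw [show (4:ℝ)*(q/4) = q by ring]; exact h2
    · rcases hq with rfl | ⟨k, h1, h2⟩
      · exact Or.inr ⟨0, by norm_num⟩
      · obtain ⟨hq0, hq1⟩ := key q k h1 h2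
        refine Or.inr ⟨0, ?_, ?_⟩ <;> norm_num <;> linarith
    · rcases hq with rfl | ⟨k, h1, h2⟩
      · exact Or.inr ⟨0, by norm_num⟩
      · obtain ⟨hq0, hq1⟩ := key q k h1 h2
        refine Or.inr ⟨0, ?_, ?_⟩ <;> norm_num <;> linarith
end

section
/- Let X be a non-empty σ-compact metric space and let Λ(X) be its set of trivial points. If S ⊆ X \ Λ(X) is such that (X \ Λ(X)) \ S is totally disconnected, then X \ S is totally disconnected. -/
open Set

theorem totallyDisconnected_of_removing_S
    (X : Type*) [MetricSpace X] [SigmaCompactSpace X] [Nonempty X]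
    (Λ : Set X) (hΛ : Λ = {x : X | connectedComponent x = {x}})
    (S : Set X) (hS : S ⊆ Λᶜ)
    (hTD : IsTotallyDisconnected (Λᶜ \ S)) :
    IsTotallyDisconnected Sᶜ := by
  intro t htS ht
  by_cases h : ∃ x ∈ t, x ∈ Λ
  · obtain ⟨x, hxt, hxΛ⟩ := h
    have : t ⊆ connectedComponent x := ht.subset_connectedComponent hxt
    rw [hΛ] at hxΛ
    rw [hxΛ] at this
    exact subsingleton_of_subset_singleton this
  · push_neg at h
    exact hTD t (fun y hy => ⟨h y hy, htS hy⟩) ht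
end

section
/- Let E = E(n,𝒟) ⊆ ℝ^d be a fractal cube whose affine hull lies in a hyperplane {x : ⟨x,α⟩ = c} with α₁ ≠ 0. Then for every digit h ∈ 𝒟, ⟨h, α⟩ = (n−1)c, and E = g(Ẽ), where Ẽ ⊆ ℝ^{d−1} is the fractal cube with scale n and digit set {π(h) : h ∈ 𝒟} (π deleting the first coordinate), and g(y) = ((c − ⟨y, π(α)⟩)/α₁, y) for y = (x₂,…,x_d) ∈ ℝ^{d−1}. In particular dim_H E = dim_H Ẽ. -/
open Set

theorem fractal_cube_in_hyperplane
    (d n N : ℕ) (hn : 2 ≤ n)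
    (D : Fin N → (Fin (d+1) → ℝ))
    (hD : ∀ j i, ∃ m : ℕ, m < n ∧ D j i = (m : ℝ))
    (φ : Fin N → (Fin (d+1) → ℝ) → (Fin (d+1) → ℝ))
    (hφ : ∀ j x, φ j x = (n : ℝ)⁻¹ • (x + D j))
    (E : Set (Fin (d+1) → ℝ)) (hEne : E.Nonempty) (hEc : IsCompact E)
    (hE : E = ⋃ j, φ j '' E)
    -- `E` lies in the hyperplane `⟨x, α⟩ = c` with `α 0 ≠ 0`
    (α : Fin (d+1) → ℝ) (c : ℝ) (hα : α 0 ≠ 0)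
    (hplane : ∀ x ∈ E, ∑ i, x i * α i = c)
    -- the projected fractal cube `Ẽ ⊆ ℝ^d`
    (Et : Set (Fin d → ℝ)) (hEtne : Et.Nonempty) (hEtc : IsCompact Et)
    (hEt : Et = ⋃ j, (fun y : Fin d → ℝ =>
      (n : ℝ)⁻¹ • (y + fun i => D j i.succ)) '' Et)
    -- the parametrization `g : ℝ^d → ℝ^{d+1}` of the hyperplane
    (g : (Fin d → ℝ) → (Fin (d+1) → ℝ))
    (hg : ∀ y, g y = Fin.cons ((c - ∑ i, y i * α i.succ) / α 0) y) :
    (∀ j, ∑ i, D j i * α i = (n - 1) * c) ∧ E = g '' Et ∧ dimH E = dimH Et := by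
  obtain ⟨x₀, hx₀⟩ := hEne
  have hn0 : (n : ℝ) ≠ 0 := by
    have : 0 < n := by omega
    exact_mod_cast this.ne'
  -- Part 1
  have part1 : ∀ j, ∑ i, D j i * α i = ((n : ℝ) - 1) * c := by
    intro j
    have hx : φ j x₀ ∈ E := by
      rw [hE]; exact mem_iUnion.2 ⟨j, mem_image_of_mem _ hx₀⟩
    have h1 := hplane _ hx
    have h0 := hplane _ hx₀
    rw [hφ] at h1
    simp only [Pi.smul_apply, Pi.add_apply, smul_eq_mul] at h1
    have hsum : ∑ i, (n : ℝ)⁻¹ * (x₀ i + D j i) * α i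
        = (n : ℝ)⁻¹ * (∑ i, x₀ i * α i + ∑ i, D j i * α i) := by
      rw [mul_add, Finset.mul_sum, Finset.mul_sum, ← Finset.sum_add_distrib]
      exact Finset.sum_congr rfl fun i _ => by ring
    rw [hsum, h0] at h1
    field_simp at h1
    linarith
  -- commuting relation
  have comm : ∀ j y, φ j (g y)
      = g ((n : ℝ)⁻¹ • (y + fun i => D j i.succ)) := by
    intro j y
    have hj := part1 j
    rw [Fin.sum_univ_succ] at hj
    funext i
    refine Fin.cases ?_ (fun k => ?_) i
    · rw [hφ, hg, hg]
      simp only [Pi.smul_apply, Pi.add_apply, smul_eq_mul, Fin.cons_zero]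
      have hs : ∑ i : Fin d, (n : ℝ)⁻¹ * (y i + D j i.succ) * α i.succ
          = (n : ℝ)⁻¹ * ((∑ i : Fin d, y i * α i.succ) + ∑ i : Fin d, D j i.succ * α i.succ) := by
        rw [mul_add, Finset.mul_sum, Finset.mul_sum, ← Finset.sum_add_distrib]
        exact Finset.sum_congr rfl fun i _ => by ring
      rw [hs]
      field_simp
      linear_combination hj
    · rw [hφ, hg, hg]
      simp only [Pi.smul_apply, Pi.add_apply, smul_eq_mul, Fin.cons_succ]
  -- `g` is Lipschitz
  set Kr : ℝ := max 1 ((∑ i : Fin d, |α i.succ|) / |α 0|) with hKr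
  have hKr1 : 1 ≤ Kr := le_max_left _ _
  have hKr0 : 0 ≤ Kr := zero_le_one.trans hKr1
  have hα0 : 0 < |α 0| := abs_pos.2 hα
  have lipg : LipschitzWith Kr.toNNReal g := by
    apply LipschitzWith.of_dist_le_mul
    intro y y'
    rw [Real.coe_toNNReal _ hKr0, dist_pi_le_iff (by positivity)]
    intro i
    refine Fin.cases ?_ (fun k => ?_) i
    · rw [hg, hg, Fin.cons_zero, Fin.cons_zero, Real.dist_eq, div_sub_div_same, abs_div]
      have hnum : |c - ∑ i, y i * α i.succ - (c - ∑ i, y' i * α i.succ)|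
          ≤ (∑ i : Fin d, |α i.succ|) * dist y y' := by
        have he : c - ∑ i, y i * α i.succ - (c - ∑ i, y' i * α i.succ)
            = ∑ i, (y' i - y i) * α i.succ := by
          rw [show ∑ i, (y' i - y i) * α i.succ
              = ∑ i, (y' i * α i.succ - y i * α i.succ) from
            Finset.sum_congr rfl fun i _ => by ring, Finset.sum_sub_distrib]
          ring
        rw [he]
        calc |∑ i, (y' i - y i) * α i.succ| ≤ ∑ i, |(y' i - y i) * α i.succ| :=
              Finset.abs_sum_le_sum_abs _ _
          _ ≤ ∑ i : Fin d, |α i.succ| * dist y y' := by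
              refine Finset.sum_le_sum fun i _ => ?_
              rw [abs_mul, mul_comm]
              have hd := dist_le_pi_dist y y' i
              rw [Real.dist_eq, abs_sub_comm] at hd
              exact mul_le_mul_of_nonneg_left hd (abs_nonneg _)
          _ = (∑ i : Fin d, |α i.succ|) * dist y y' := by rw [← Finset.sum_mul]
      calc |c - ∑ i, y i * α i.succ - (c - ∑ i, y' i * α i.succ)| / |α 0|
          ≤ ((∑ i : Fin d, |α i.succ|) * dist y y') / |α 0| := by gcongr
        _ = ((∑ i : Fin d, |α i.succ|) / |α 0|) * dist y y' := mul_div_right_comm _ _ _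
        _ ≤ Kr * dist y y' := by
            exact mul_le_mul_of_nonneg_right (le_max_right _ _) dist_nonneg
    · rw [hg, hg, Fin.cons_succ, Fin.cons_succ]
      exact (dist_le_pi_dist y y' k).trans (le_mul_of_one_le_left dist_nonneg hKr1)
  -- the projection `π` is 1-Lipschitz
  set π : (Fin (d+1) → ℝ) → (Fin d → ℝ) := fun x i => x i.succ with hπdef
  have lipπ : LipschitzWith 1 π := by
    apply LipschitzWith.of_dist_le_mul
    intro x x'
    rw [NNReal.coe_one, one_mul, dist_pi_le_iff dist_nonneg]
    intro i
    exact dist_le_pi_dist x x' i.succ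
  have hπg : ∀ y, π (g y) = y := by
    intro y; funext i; rw [hg]; simp [hπdef]
  -- `B := g '' Et` is a nonempty compact invariant set
  have hBne : (g '' Et).Nonempty := hEtne.image g
  have hBc : IsCompact (g '' Et) := hEtc.image lipg.continuous
  have hB : g '' Et = ⋃ j, φ j '' (g '' Et) := by
    conv_lhs => rw [hEt, image_iUnion]
    refine iUnion_congr fun j => ?_
    rw [← image_comp, ← image_comp]
    exact image_congr' fun y => (comm j y).symm
  -- contraction of the maps `φ j`
  have hκ : ∀ j (a b : Fin (d+1) → ℝ),
      edist (φ j a) (φ j b) = (n : ENNReal)⁻¹ * edist a b := by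
    intro j a b
    rw [hφ, hφ, edist_smul₀, edist_add_right, ENNReal.smul_def, smul_eq_mul]
    congr 1
    have h1 : ‖(n : ℝ)⁻¹‖₊ = ((n : NNReal))⁻¹ := by
      rw [nnnorm_inv]
      congr 1
      exact_mod_cast Real.nnnorm_natCast n
    rw [h1, ENNReal.coe_inv (by exact_mod_cast hn0)]
    norm_cast
  have step : ∀ (A C : Set (Fin (d+1) → ℝ)), C.Nonempty → IsCompact C →
      A = ⋃ j, φ j '' A → C = ⋃ j, φ j '' C →
      ∀ x ∈ A, ∃ y ∈ C, edist x y ≤ (n : ENNReal)⁻¹ * EMetric.hausdorffEdist A C := by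
    intro A C hCne hCc hA hC x hx
    rw [hA] at hx
    obtain ⟨j, hj⟩ := mem_iUnion.1 hx
    obtain ⟨a, ha, rfl⟩ := hj
    obtain ⟨b, hb, hab⟩ := hCc.exists_infEdist_eq_edist hCne a
    refine ⟨φ j b, ?_, ?_⟩
    · rw [hC]; exact mem_iUnion.2 ⟨j, mem_image_of_mem _ hb⟩
    · rw [hκ]
      refine mul_le_mul_right ?_ _
      rw [← hab]
      exact EMetric.infEdist_le_hausdorffEdist_of_mem ha
  set r := EMetric.hausdorffEdist E (g '' Et) with hrdef
  have hrtop : r ≠ ⊤ :=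
    Metric.hausdorffEdist_ne_top_of_nonempty_of_bounded ⟨x₀, hx₀⟩ hBne
      hEc.isBounded hBc.isBounded
  have hle : r ≤ (n : ENNReal)⁻¹ * r := by
    refine EMetric.hausdorffEdist_le_of_mem_edist
      (step E (g '' Et) hBne hBc hE hB) ?_
    intro x hx
    obtain ⟨y, hy, hxy⟩ := step (g '' Et) E ⟨x₀, hx₀⟩ hEc hB hE x hx
    exact ⟨y, hy, hxy.trans_eq (congrArg (fun t => (n : ENNReal)⁻¹ * t) EMetric.hausdorffEdist_comm)⟩
  have hr0 : r = 0 := by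
    by_contra h
    have h1 : (n : ENNReal)⁻¹ * r < 1 * r := by
      refine (ENNReal.mul_lt_mul_iff_left h hrtop).2 ?_
      rw [ENNReal.inv_lt_one]
      exact_mod_cast (by omega : 1 < n)
    rw [one_mul] at h1
    exact absurd (hle.trans_lt h1) (lt_irrefl r)
  have hEB : E = g '' Et :=
    (EMetric.hausdorffEdist_zero_iff_eq_of_closed hEc.isClosed hBc.isClosed).1 hr0
  refine ⟨part1, hEB, ?_⟩
  rw [hEB]
  refine le_antisymm (lipg.dimH_image_le Et) ?_
  have hEt' : π '' (g '' Et) = Et := by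
    rw [← image_comp]
    have : π ∘ g = id := funext hπg
    rw [this, image_id]
  conv_lhs => rw [← hEt']
  exact lipπ.dimH_image_le _
end
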